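/- arXiv:1209.5521 — 2 statements merged into one kernel-verified Lean document; each statement's English description precedes it below -/
import Mathlib

section
/- Let c > 0, K ∈ ℝ and n ∈ ℕ. Consider the function f : ℝ → ℂ given by f(β) = exp(iβK − β²c²/2). Then the n-th derivative of f at β = 0 equals (−c)ⁿ · He_n(−iK/c), where He_n(−iK/c) denotes the evaluation at the complex number −iK/c of the n-th probabilists' Hermite polynomial He_n. -/
/-!
Completing the square, `iβK − β²c²/2 = −(cβ − b)²/2 + b²/2` with `b = iK/c`, so the function
is `β ↦ G(cβ − b) / G(b)` for the Gaussian `G z = exp(−z²/2)`, viewed as an entire function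
restricted to the real line. Rodrigues' formula `G⁽ⁿ⁾ = (−1)ⁿ Heₙ G` holds on all of `ℂ`, the
affine substitution contributes `cⁿ`, and at `β = 0` the two Gaussian factors cancel.
-/

open Polynomial Complex

theorem Polynomial.iteratedDeriv_cexp_neg_sq_div_two (n : ℕ) (z : ℂ) :
    iteratedDeriv n (fun w : ℂ => cexp (-(w ^ 2 / 2))) z =
      (-1) ^ n * aeval z (hermite n) * cexp (-(z ^ 2 / 2)) := by
  induction n generalizing z with
  | zero => simp
  | succ n ih =>
    have hG : HasDerivAt (fun w : ℂ => cexp (-(w ^ 2 / 2))) (-z * cexp (-(z ^ 2 / 2))) z :=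
      ((hasDerivAt_pow 2 z).div_const 2).fun_neg.cexp.congr_deriv (by push_cast; ring)
    have hH := Polynomial.hasDerivAt_aeval (hermite n) z
    rw [iteratedDeriv_succ, _root_.funext ih, ((hH.const_mul _).fun_mul hG).deriv, hermite_succ,
      map_sub, map_mul, aeval_X]
    ring

theorem iteratedDeriv_comp_ofReal {g : ℂ → ℂ} (hg : Differentiable ℂ g) (n : ℕ) (x : ℝ) :
    iteratedDeriv n (fun y : ℝ => g y) x = iteratedDeriv n g x := by
  induction n generalizing x with
  | zero => simp
  | succ n ih =>
    have hgn := (hg.contDiff (n := ⊤)).differentiable_iteratedDeriv n (WithTop.coe_lt_top _)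
    rw [iteratedDeriv_succ, _root_.funext ih, iteratedDeriv_succ,
      (hgn x).hasDerivAt.comp_ofReal.deriv]

/-- Let `c > 0`, `K ∈ ℝ` and `n ∈ ℕ`. The `n`-th derivative of
`β ↦ exp(iβK − β²c²/2)` at `β = 0` equals `(−c)ⁿ He_n(−iK/c)`, where `He_n` is the `n`-th
probabilists' Hermite polynomial evaluated at the complex number `−iK/c`. -/
theorem iteratedDeriv_gaussian_char_eq_hermite (c K : ℝ) (hc : 0 < c) (n : ℕ) :
    iteratedDeriv n
        (fun β : ℝ => Complex.exp (Complex.I * (β : ℂ) * (K : ℂ) - (β : ℂ) ^ 2 * (c : ℂ) ^ 2 / 2))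
        0 =
      (-(c : ℂ)) ^ n *
        Polynomial.aeval (-Complex.I * (K : ℂ) / (c : ℂ)) (Polynomial.hermite n) := by
  set b : ℂ := I * K / c with hb
  have hc' : (c : ℂ) ≠ 0 := by exact_mod_cast hc.ne'
  have complete_sq (z : ℂ) : cexp (I * z * K - z ^ 2 * c ^ 2 / 2) =
      cexp (-((c * z - b) ^ 2 / 2)) / cexp (-(b ^ 2 / 2)) := by
    rw [← Complex.exp_sub, hb]
    congr 1
    field_simp
    ring
  simp_rw [complete_sq]
  rw [iteratedDeriv_comp_ofReal (g := fun z => cexp (-((c * z - b) ^ 2 / 2)) / cexp (-(b ^ 2 / 2)))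
      (by fun_prop), iteratedDeriv_div_const,
    iteratedDeriv_comp_const_mul (f := fun w => cexp (-((w - b) ^ 2 / 2))) (by fun_prop),
    iteratedDeriv_comp_sub_const (f := fun w => cexp (-(w ^ 2 / 2)))]
  simp only [iteratedDeriv_cexp_neg_sq_div_two, ofReal_zero, mul_zero, zero_sub, neg_sq]
  rw [mul_div_assoc, mul_div_cancel_right₀ _ (exp_ne_zero _), neg_pow, hb, neg_mul, neg_div]
  ring
end

section
/- Let μ be a finite Borel measure on [0, ∞), let R > 0, and let g : ℂ → ℂ be a function that is analytic on the open set {z ∈ ℂ : Re z > 0} ∪ {z ∈ ℂ : |z| < R} and satisfies g(z) = ∫_0^∞ exp(−zλ) dμ(λ) for all z with Re z > 0. Then for every real x with x > −R, the function λ ↦ exp(−xλ) is μ-integrable and ∫_0^∞ exp(−xλ) dμ(λ) = g(x). -/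
/-!
The Laplace transform `F` of `μ` is analytic on `Re z > 0`: at a point `x₀ > 0` it is the sum of
its Taylor series, whose coefficients are the moments `∫ (-l)ⁿ e^{-x₀ l} / n! dμ`. Since `g = F`
near `x₀`, the Cauchy series of `g` on any closed disc around `x₀` inside the domain of `g` is
this same series. For `x₀ = max x ((x + R) / 2)` the disc of radius `R` qualifies and contains
`x`. At `x ≤ x₀` all terms `((x₀ - x) l)ⁿ / n! · e^{-x₀ l}` are nonnegative because `μ` lives on
`[0, ∞)`, so monotone convergence turns the convergent series into the integrability of
`e^{-x l}` and the identity `∫ e^{-x l} dμ = g x`.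
-/

open MeasureTheory Complex
open scoped Nat ENNReal NNReal Topology

section NonnegSeries

variable {α : Type*} [MeasurableSpace α] {μ : Measure α} {u : ℕ → α → ℝ} {f : α → ℝ}

theorem integrable_of_hasSum_of_nonneg (hu_nonneg : ∀ n, 0 ≤ᵐ[μ] u n)
    (hu_int : ∀ n, Integrable (u n) μ) (hf : ∀ᵐ a ∂μ, HasSum (fun n ↦ u n a) (f a))
    (hsum : Summable fun n ↦ ∫ a, u n a ∂μ) : Integrable f μ := by
  have hf_meas : AEStronglyMeasurable f μ :=
    aestronglyMeasurable_of_tendsto_ae (f := fun n a ↦ ∑ i ∈ Finset.range n, u i a) Filter.atTop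
      (fun n ↦ Finset.aestronglyMeasurable_fun_sum _ fun i _ ↦ (hu_int i).1)
      (by filter_upwards [hf] with a ha using ha.tendsto_sum_nat)
  refine ⟨hf_meas, ?_⟩
  have hf_enorm : ∀ᵐ a ∂μ, ‖f a‖ₑ = ∑' n, ENNReal.ofReal (u n a) := by
    filter_upwards [hf, ae_all_iff.2 hu_nonneg] with a ha hna
    rw [Real.enorm_eq_ofReal (ha.nonneg hna), ha.tsum_eq.symm,
      ENNReal.ofReal_tsum_of_nonneg hna ha.summable]
  calc ∫⁻ a, ‖f a‖ₑ ∂μ = ∑' n, ∫⁻ a, ENNReal.ofReal (u n a) ∂μ := by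
        rw [lintegral_congr_ae hf_enorm,
          lintegral_tsum fun n ↦ (hu_int n).1.aemeasurable.ennreal_ofReal]
    _ = ENNReal.ofReal (∑' n, ∫ a, u n a ∂μ) := by
        simp_rw [← ofReal_integral_eq_lintegral_ofReal (hu_int _) (hu_nonneg _)]
        exact (ENNReal.ofReal_tsum_of_nonneg (fun n ↦ integral_nonneg_of_ae (hu_nonneg n))
          hsum).symm
    _ < ∞ := ENNReal.ofReal_lt_top

theorem hasSum_integral_of_hasSum_of_nonneg (hu_nonneg : ∀ n, 0 ≤ᵐ[μ] u n)
    (hu_int : ∀ n, Integrable (u n) μ) (hf : ∀ᵐ a ∂μ, HasSum (fun n ↦ u n a) (f a))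
    (hsum : Summable fun n ↦ ∫ a, u n a ∂μ) : HasSum (fun n ↦ ∫ a, u n a ∂μ) (∫ a, f a ∂μ) := by
  have hsum_norm : Summable fun n ↦ ∫ a, ‖u n a‖ ∂μ := by
    refine hsum.congr fun n ↦ integral_congr_ae ?_
    filter_upwards [hu_nonneg n] with a ha using (Real.norm_of_nonneg ha).symm
  have hf_tsum : f =ᵐ[μ] fun a ↦ ∑' n, u n a := by
    filter_upwards [hf] with a ha using ha.tsum_eq.symm
  rw [integral_congr_ae hf_tsum]
  exact hasSum_integral_of_summable_integral_norm hu_int hsum_norm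

end NonnegSeries

noncomputable def laplaceTransform (μ : Measure ℝ) (z : ℂ) : ℂ := ∫ l, cexp (-z * l) ∂μ

/-- The `n`-th Taylor coefficient at `x₀` of `z ↦ exp (-z * l)`. -/
noncomputable def laplaceTerm (x₀ : ℝ) (n : ℕ) (l : ℝ) : ℝ := (-l) ^ n / n ! * Real.exp (-x₀ * l)

noncomputable def laplaceSeries (μ : Measure ℝ) (x₀ : ℝ) : FormalMultilinearSeries ℂ ℂ ℂ :=
  FormalMultilinearSeries.ofScalars ℂ fun n ↦ ((∫ l, laplaceTerm x₀ n l ∂μ : ℝ) : ℂ)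

theorem hasSum_laplaceTerm_mul_pow (x₀ l : ℝ) (y : ℂ) :
    HasSum (fun n ↦ (laplaceTerm x₀ n l : ℂ) * y ^ n) (cexp (-(x₀ + y) * l)) := by
  have hexp := (NormedSpace.expSeries_div_hasSum_exp (-(l * y))).mul_right (cexp (-x₀ * l))
  rw [← Complex.exp_eq_exp_ℂ, ← Complex.exp_add] at hexp
  have hterm (n : ℕ) :
      (laplaceTerm x₀ n l : ℂ) * y ^ n = (-(l * y)) ^ n / n ! * cexp (-x₀ * l) := by
    simp only [laplaceTerm]
    push_cast
    ring
  simp only [hterm]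
  rwa [show -(x₀ + y) * l = -(l * y) + -x₀ * l by ring]

theorem hasSum_laplaceTerm_mul_pow_real (x₀ l t : ℝ) :
    HasSum (fun n ↦ laplaceTerm x₀ n l * t ^ n) (Real.exp (-(x₀ + t) * l)) := by
  rw [← Complex.hasSum_ofReal]
  push_cast
  exact hasSum_laplaceTerm_mul_pow x₀ l t

theorem abs_laplaceTerm_le {x₀ l : ℝ} (hx₀ : 0 < x₀) (hl : 0 ≤ l) (n : ℕ) :
    |laplaceTerm x₀ n l| ≤ (x₀ ^ n)⁻¹ := by
  have hexp := Real.pow_div_factorial_le_exp _ (mul_nonneg hx₀.le hl) n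
  have hterm : |laplaceTerm x₀ n l| * x₀ ^ n = (x₀ * l) ^ n / n ! * Real.exp (-(x₀ * l)) := by
    rw [laplaceTerm, abs_mul, abs_div, abs_pow, abs_neg, abs_of_nonneg hl, Nat.abs_cast,
      Real.abs_exp]
    ring_nf
  rw [inv_eq_one_div, le_div_iff₀ (pow_pos hx₀ n), hterm, Real.exp_neg, ← div_eq_mul_inv,
    div_le_one (Real.exp_pos _)]
  exact hexp

theorem laplaceTransform_ofReal (μ : Measure ℝ) (x : ℝ) :
    laplaceTransform μ x = ((∫ l, Real.exp (-x * l) ∂μ : ℝ) : ℂ) := by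
  rw [laplaceTransform, ← integral_complex_ofReal]
  push_cast
  rfl

theorem laplaceSeries_apply (μ : Measure ℝ) (x₀ : ℝ) (n : ℕ) (y : ℂ) :
    laplaceSeries μ x₀ n (fun _ ↦ y) = ∫ l, (laplaceTerm x₀ n l : ℂ) * y ^ n ∂μ := by
  rw [laplaceSeries, FormalMultilinearSeries.ofScalars_apply_eq, smul_eq_mul, integral_mul_const,
    integral_complex_ofReal]

theorem laplaceSeries_apply_ofReal (μ : Measure ℝ) (x₀ : ℝ) (n : ℕ) (t : ℝ) :
    laplaceSeries μ x₀ n (fun _ ↦ (t : ℂ)) = ((∫ l, laplaceTerm x₀ n l * t ^ n ∂μ : ℝ) : ℂ) := by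
  rw [laplaceSeries_apply, ← integral_complex_ofReal]
  push_cast
  rfl

section FiniteMeasure

variable {μ : Measure ℝ} [IsFiniteMeasure μ] {x₀ : ℝ}

theorem integrable_laplaceTerm (hμ : ∀ᵐ l ∂μ, 0 ≤ l) (hx₀ : 0 < x₀) (n : ℕ) :
    Integrable (laplaceTerm x₀ n) μ :=
  .of_bound (by unfold laplaceTerm; fun_prop) (x₀ ^ n)⁻¹
    (by filter_upwards [hμ] with l hl using abs_laplaceTerm_le hx₀ hl n)

theorem norm_laplaceSeries_le (hμ : ∀ᵐ l ∂μ, 0 ≤ l) (hx₀ : 0 < x₀) (n : ℕ) :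
    ‖laplaceSeries μ x₀ n‖ ≤ (x₀ ^ n)⁻¹ * μ.real Set.univ := by
  rw [laplaceSeries, FormalMultilinearSeries.ofScalars_norm, norm_real]
  exact norm_integral_le_of_norm_le_const
    (by filter_upwards [hμ] with l hl using abs_laplaceTerm_le hx₀ hl n)

theorem hasFPowerSeriesOnBall_laplaceTransform (hμ : ∀ᵐ l ∂μ, 0 ≤ l) (hx₀ : 0 < x₀) :
    HasFPowerSeriesOnBall (laplaceTransform μ) (laplaceSeries μ x₀) x₀ (ENNReal.ofReal x₀) where
  r_le := by
    refine FormalMultilinearSeries.le_radius_of_bound _ (μ.real Set.univ) fun n ↦ ?_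
    rw [Real.coe_toNNReal _ hx₀.le]
    calc ‖laplaceSeries μ x₀ n‖ * x₀ ^ n ≤ (x₀ ^ n)⁻¹ * μ.real Set.univ * x₀ ^ n := by
          gcongr
          exact norm_laplaceSeries_le hμ hx₀ n
      _ = μ.real Set.univ := by field_simp
  r_pos := by simpa using hx₀
  hasSum {y} hy := by
    have hy : ‖y‖ < x₀ := by
      rwa [Metric.mem_eball, edist_zero_right, ← ofReal_norm,
        ENNReal.ofReal_lt_ofReal_iff hx₀] at hy
    set G : ℕ → ℝ → ℂ := fun n l ↦ (laplaceTerm x₀ n l : ℂ) * y ^ n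
    have hG_int (n : ℕ) : Integrable (G n) μ :=
      ((integrable_laplaceTerm hμ hx₀ n).ofReal).mul_const _
    have hG_le (n : ℕ) : ∫ l, ‖G n l‖ ∂μ ≤ μ.real Set.univ * (‖y‖ / x₀) ^ n := by
      rw [mul_comm]
      refine (Real.le_norm_self _).trans (norm_integral_le_of_norm_le_const ?_)
      filter_upwards [hμ] with l hl
      rw [norm_norm, norm_mul, norm_real, Real.norm_eq_abs, norm_pow, div_pow, div_eq_inv_mul]
      exact mul_le_mul_of_nonneg_right (abs_laplaceTerm_le hx₀ hl n) (by positivity)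
    have hG_sum : Summable fun n ↦ ∫ l, ‖G n l‖ ∂μ :=
      .of_nonneg_of_le (fun n ↦ integral_nonneg fun l ↦ norm_nonneg _) hG_le
        ((summable_geometric_of_lt_one (by positivity) ((div_lt_one hx₀).2 hy)).mul_left _)
    have hG_tsum (l : ℝ) : ∑' n, G n l = cexp (-(x₀ + y) * l) :=
      (hasSum_laplaceTerm_mul_pow x₀ l y).tsum_eq
    simpa only [laplaceSeries_apply, laplaceTransform, hG_tsum] using
      hasSum_integral_of_summable_integral_norm hG_int hG_sum

theorem hasFPowerSeriesOnBall_laplaceSeries_of_differentiableOn (hμ : ∀ᵐ l ∂μ, 0 ≤ l)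
    (hx₀ : 0 < x₀) {g : ℂ → ℂ} {r : ℝ≥0} (hr : 0 < r)
    (hg : DifferentiableOn ℂ g (Metric.closedBall (x₀ : ℂ) r))
    (hgF : laplaceTransform μ =ᶠ[𝓝 (x₀ : ℂ)] g) :
    HasFPowerSeriesOnBall g (laplaceSeries μ x₀) x₀ r := by
  have hcauchy := hg.hasFPowerSeriesOnBall hr
  rwa [hcauchy.hasFPowerSeriesAt.eq_formalMultilinearSeries
    ((hasFPowerSeriesOnBall_laplaceTransform hμ hx₀).hasFPowerSeriesAt.congr hgF)] at hcauchy

theorem integrable_exp_and_laplaceTransform_eq_of_hasFPowerSeriesOnBall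
    (hμ : ∀ᵐ l ∂μ, 0 ≤ l) (hx₀ : 0 < x₀) {g : ℂ → ℂ} {r : ℝ≥0∞}
    (hg : HasFPowerSeriesOnBall g (laplaceSeries μ x₀) x₀ r) {x : ℝ} (hx : x ≤ x₀)
    (hxr : ENNReal.ofReal (x₀ - x) < r) :
    Integrable (fun l ↦ Real.exp (-x * l)) μ ∧ laplaceTransform μ x = g x := by
  set u : ℕ → ℝ → ℝ := fun n l ↦ laplaceTerm x₀ n l * (x - x₀) ^ n
  have hu_nonneg (n : ℕ) : 0 ≤ᵐ[μ] u n := by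
    filter_upwards [hμ] with l hl
    have hu : u n l = ((x₀ - x) * l) ^ n / n ! * Real.exp (-x₀ * l) := by
      simp only [u, laplaceTerm]
      rw [show (x₀ - x) * l = -l * (x - x₀) by ring, mul_pow]
      ring
    rw [hu]
    have := sub_nonneg.2 hx
    positivity
  have hu_int (n : ℕ) : Integrable (u n) μ := (integrable_laplaceTerm hμ hx₀ n).mul_const _
  have hu_sum : ∀ᵐ l ∂μ, HasSum (fun n ↦ u n l) (Real.exp (-x * l)) :=
    ae_of_all _ fun l ↦ by simpa using hasSum_laplaceTerm_mul_pow_real x₀ l (x - x₀)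
  have hseries : HasSum (fun n ↦ ((∫ l, u n l ∂μ : ℝ) : ℂ)) (g x) := by
    have hmem : ((x - x₀ : ℝ) : ℂ) ∈ Metric.eball 0 r := by
      rwa [Metric.mem_eball, edist_zero_right, ← ofReal_norm, norm_real, Real.norm_eq_abs,
        abs_of_nonpos (sub_nonpos.2 hx), neg_sub]
    have h := hg.hasSum hmem
    rwa [show (x₀ : ℂ) + ((x - x₀ : ℝ) : ℂ) = x by push_cast; ring,
      funext fun n ↦ laplaceSeries_apply_ofReal μ x₀ n (x - x₀)] at h
  have hsum : Summable fun n ↦ ∫ l, u n l ∂μ := Complex.summable_ofReal.1 hseries.summable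
  refine ⟨integrable_of_hasSum_of_nonneg hu_nonneg hu_int hu_sum hsum, ?_⟩
  rw [laplaceTransform_ofReal]
  exact (Complex.hasSum_ofReal.2
    (hasSum_integral_of_hasSum_of_nonneg hu_nonneg hu_int hu_sum hsum)).unique hseries

end FiniteMeasure

theorem closedBall_subset_re_pos_union_ball {x₀ R : ℝ} (hx₀ : 0 < x₀) :
    Metric.closedBall (x₀ : ℂ) R ⊆ {z : ℂ | 0 < z.re} ∪ Metric.ball 0 R := by
  intro z hz
  by_cases hre : 0 < z.re
  · exact Or.inl hre
  right
  rw [Metric.mem_closedBall, dist_eq] at hz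
  rw [mem_ball_zero_iff]
  have hR : 0 ≤ R := (norm_nonneg _).trans hz
  -- `‖z‖² = ‖z - x₀‖² + 2 x₀ Re z - x₀² < ‖z - x₀‖²` when `Re z ≤ 0 < x₀`
  have hsq : ‖z‖ ^ 2 < R ^ 2 := by
    have hz2 := pow_le_pow_left₀ (norm_nonneg _) hz 2
    rw [Complex.sq_norm, normSq_apply] at hz2 ⊢
    simp only [sub_re, ofReal_re, sub_im, ofReal_im, sub_zero] at hz2
    nlinarith
  exact lt_of_pow_lt_pow_left₀ 2 hR hsq

/-- Laplace-transform continuation principle: let `μ` be a finite Borel measure supported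
on `[0,∞)`, `R > 0`, and let `g : ℂ → ℂ` be analytic on the open set
`{Re z > 0} ∪ {|z| < R}` with `g(z) = ∫ e^{−zλ} dμ(λ)` for `Re z > 0`. Then for every
real `x > −R`, `λ ↦ e^{−xλ}` is `μ`-integrable and `∫ e^{−xλ} dμ(λ) = g(x)`. -/
theorem laplace_transform_analytic_continuation
    (μ : Measure ℝ) [IsFiniteMeasure μ] (hμ : μ (Set.Iio 0) = 0)
    (R : ℝ) (hR : 0 < R) (g : ℂ → ℂ)
    (hg : AnalyticOnNhd ℂ g ({z : ℂ | 0 < z.re} ∪ Metric.ball 0 R))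
    (hrep : ∀ z : ℂ, 0 < z.re → g z = ∫ l : ℝ, Complex.exp (-z * (l : ℂ)) ∂μ)
    (x : ℝ) (hx : -R < x) :
    Integrable (fun l : ℝ => Real.exp (-x * l)) μ ∧
      ∫ l : ℝ, Complex.exp (-(x : ℂ) * (l : ℂ)) ∂μ = g (x : ℂ) := by
  have hμ_nonneg : ∀ᵐ l ∂μ, 0 ≤ l := by
    rw [ae_iff]
    simp only [not_le]
    exact hμ
  set x₀ := max x ((x + R) / 2)
  have hx₀ : 0 < x₀ := lt_max_of_lt_right (by linarith)
  have hgF : laplaceTransform μ =ᶠ[𝓝 (x₀ : ℂ)] g := by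
    filter_upwards [(isOpen_lt continuous_const continuous_re).mem_nhds (by simpa using hx₀)]
      with z hz using (hrep z hz).symm
  have hser := hasFPowerSeriesOnBall_laplaceSeries_of_differentiableOn hμ_nonneg hx₀ (r := ⟨R, hR.le⟩)
    hR (hg.differentiableOn.mono (closedBall_subset_re_pos_union_ball hx₀)) hgF
  have hxR : x₀ - x < R := by
    rw [sub_lt_iff_lt_add, max_lt_iff]
    constructor <;> linarith
  exact integrable_exp_and_laplaceTransform_eq_of_hasFPowerSeriesOnBall hμ_nonneg hx₀ hser
    (le_max_left _ _) ((ENNReal.ofReal_lt_coe_iff (sub_nonneg.2 (le_max_left _ _))).2 hxR)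
end
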